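/- arXiv:q-alg/9601012 — 2 statements merged into one kernel-verified Lean document; each statement's English description precedes it below -/
import Mathlib

section
/- Symmetries of the q-multinomial coefficients: for all integers k ≥ 1, L ≥ 0, 0 ≤ p ≤ k, and all integers a, the identities [L, a]^{(p)}_k = q^{(k−p)L − a} · [L, kL−a]^{(k−p)}_k and [L, a]^{(0)}_k = [L, kL−a]^{(0)}_k hold in the ring ℤ[q, q^{−1}] of Laurent polynomials over ℤ. -/
/-!
Write `k = n + 1` and attach to a tuple `j` the chain
`L = c₀, c₁ = j₀, …, c_k = j_n, c_{k+1} = 0`. The product of `q`-binomials in the summand of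
`[L, a]⁽ᵖ⁾_k` is `∏ [c_ℓ choose c_{ℓ+1}]`, which vanishes unless the chain descends and then
telescopes to `(q)_L / ∏ (q)_{c_ℓ - c_{ℓ+1}}`. The involution `c_ℓ ↦ L - c_{k+1-ℓ}` of chains,
i.e. `j_ℓ ↦ L - j_{n-ℓ}` of tuples, reverses the gaps `c_ℓ - c_{ℓ+1}` and so fixes this product.
It sends `Σ j = a` to `kL - a`, keeps the quadratic part of the exponent of `q`, and turns its
linear part for `p` into the one for `k - p`, shifted by `(k - p)L - a`. The second identity is
the first at `p = 0` combined with `[L, b]⁽ᵏ⁾_k = q^{-b} [L, b]⁽⁰⁾_k`.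
-/

open scoped BigOperators
open scoped Classical

noncomputable section

/-- The indeterminate `q`, viewed as an element of the field `ℚ(q)` of rational
functions (into which the Laurent polynomial ring `ℤ[q,q⁻¹]` embeds). -/
def qv : RatFunc ℚ := RatFunc.X

/-- The `q`-Pochhammer symbol `(q)ₙ = ∏_{j=1}^{n} (1 - qʲ)`, with `(q)₀ = 1`. -/
def qPoch (n : ℕ) : RatFunc ℚ := ∏ j ∈ Finset.range n, (1 - qv ^ (j + 1))

/-- The Gaussian polynomial (`q`-binomial coefficient)
`[L choose a]_q = (q)_L / ((q)_a (q)_{L-a})` for `0 ≤ a ≤ L`, and `0` otherwise. -/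
def qBinom (L a : ℤ) : RatFunc ℚ :=
  if 0 ≤ a ∧ a ≤ L then qPoch L.toNat / (qPoch a.toNat * qPoch (L - a).toNat) else 0

/-- The `q`-multinomial coefficient `[L, a]⁽ᵖ⁾_k`: the sum over all tuples
`(j₁, …, j_k)` of nonnegative integers with `j₁ + ⋯ + j_k = a` (encoded as
functions `j : ℕ → ℕ` supported on `{0, …, k-1}`, with `j ℓ` playing the role of
`j_{ℓ+1}`) of
`q^{Σ_{ℓ=1}^{k-1} (L - j_ℓ) j_{ℓ+1} - Σ_{ℓ=k-p}^{k-1} j_{ℓ+1}} · [L choose j₁]_q [j₁ choose j₂]_q ⋯ [j_{k-1} choose j_k]_q`.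
It vanishes for `a` outside `0 ≤ a ≤ kL`. -/
def qMult (k L p : ℕ) (a : ℤ) : RatFunc ℚ :=
  ∑ᶠ j : ℕ → ℕ,
    if (∀ ℓ, k ≤ ℓ → j ℓ = 0) ∧ (∑ ℓ ∈ Finset.range k, (j ℓ : ℤ)) = a then
      qv ^ (∑ ℓ ∈ Finset.range (k - 1), ((L : ℤ) - (j ℓ : ℤ)) * (j (ℓ + 1) : ℤ)
            - ∑ ℓ ∈ Finset.Ico (k - p) k, (j ℓ : ℤ))
        * (qBinom (L : ℤ) (j 0 : ℤ) *
            ∏ ℓ ∈ Finset.range (k - 1), qBinom (j ℓ : ℤ) (j (ℓ + 1) : ℤ))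
    else 0

open Finset

lemma qv_ne_zero : qv ≠ 0 := RatFunc.X_ne_zero

lemma one_sub_qv_pow_ne_zero {n : ℕ} (hn : n ≠ 0) : 1 - qv ^ n ≠ 0 := by
  rw [← neg_ne_zero, neg_sub]
  simpa [qv] using
    RatFunc.algebraMap_ne_zero (Polynomial.X_pow_sub_C_ne_zero (Nat.pos_of_ne_zero hn) (1 : ℚ))

lemma qPoch_ne_zero (n : ℕ) : qPoch n ≠ 0 :=
  prod_ne_zero_iff.mpr fun j _ => one_sub_qv_pow_ne_zero j.succ_ne_zero

lemma qBinom_natCast_of_le {a b : ℕ} (h : b ≤ a) :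
    qBinom a b = qPoch a / (qPoch b * qPoch (a - b)) := by
  rw [qBinom, if_pos (by omega)]
  norm_cast

lemma qBinom_natCast_of_lt {a b : ℕ} (h : a < b) : qBinom a b = 0 :=
  if_neg (by omega)

lemma qBinom_natCast_zero (a : ℕ) : qBinom a 0 = 1 := by
  have h0 : qPoch 0 = 1 := prod_range_zero _
  rw [← Nat.cast_zero, qBinom_natCast_of_le a.zero_le, Nat.sub_zero, h0, one_mul,
    div_self (qPoch_ne_zero a)]

def qBinomProd (m : ℕ) (c : ℕ → ℕ) : RatFunc ℚ :=
  ∏ ℓ ∈ range m, qBinom (c ℓ) (c (ℓ + 1))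

section qBinomProd

variable {m : ℕ} {c : ℕ → ℕ}

lemma qBinomProd_of_antitone (hc : ∀ ℓ < m, c (ℓ + 1) ≤ c ℓ) :
    qBinomProd m c = qPoch (c 0) / (qPoch (c m) * ∏ ℓ ∈ range m, qPoch (c ℓ - c (ℓ + 1))) := by
  induction m with
  | zero => simp [qBinomProd, qPoch_ne_zero]
  | succ m ih =>
    simp only [qBinomProd] at ih ⊢
    rw [prod_range_succ, ih fun ℓ hℓ => hc ℓ (by omega), qBinom_natCast_of_le (hc m m.lt_succ_self),
      prod_range_succ]
    have := qPoch_ne_zero (c m)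
    have := qPoch_ne_zero (c (m + 1))
    have := qPoch_ne_zero (c m - c (m + 1))
    have : ∏ ℓ ∈ range m, qPoch (c ℓ - c (ℓ + 1)) ≠ 0 :=
      prod_ne_zero_iff.mpr fun _ _ => qPoch_ne_zero _
    field_simp

lemma qBinomProd_eq_zero {ℓ : ℕ} (hℓ : ℓ < m) (h : c ℓ < c (ℓ + 1)) : qBinomProd m c = 0 :=
  prod_eq_zero (mem_range.mpr hℓ) (qBinom_natCast_of_lt h)

lemma le_apply_zero_of_qBinomProd_ne_zero (h : qBinomProd m c ≠ 0) {ℓ : ℕ} (hℓ : ℓ ≤ m) :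
    c ℓ ≤ c 0 := by
  induction ℓ with
  | zero => exact le_rfl
  | succ ℓ ih =>
    exact (not_lt.mp fun hlt => h (qBinomProd_eq_zero (by omega) hlt)).trans (ih (by omega))

def chainReflect (m : ℕ) (c : ℕ → ℕ) (ℓ : ℕ) : ℕ := c 0 - c (m - ℓ)

lemma chainReflect_sub {ℓ : ℕ} (hℓ : ℓ ≤ m) : chainReflect m c (m - ℓ) = c 0 - c ℓ := by
  rw [chainReflect, Nat.sub_sub_self hℓ]

lemma qBinomProd_chainReflect (hm : c m = 0) (hc : ∀ ℓ ≤ m, c ℓ ≤ c 0) :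
    qBinomProd m (chainReflect m c) = qBinomProd m c := by
  by_cases h : ∀ ℓ < m, c (ℓ + 1) ≤ c ℓ
  · have h' : ∀ ℓ < m, chainReflect m c (ℓ + 1) ≤ chainReflect m c ℓ := fun ℓ hℓ => by
      have e₁ : m - (ℓ + 1) = m - 1 - ℓ := by omega
      have e₂ : m - ℓ = m - 1 - ℓ + 1 := by omega
      rw [chainReflect, chainReflect, e₁, e₂]
      exact Nat.sub_le_sub_left (h _ (by omega)) _
    have hgaps : ∏ ℓ ∈ range m, qPoch (chainReflect m c ℓ - chainReflect m c (ℓ + 1)) =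
        ∏ ℓ ∈ range m, qPoch (c ℓ - c (ℓ + 1)) := by
      rw [← prod_range_reflect]
      refine prod_congr rfl fun ℓ hℓ => ?_
      have hℓ := mem_range.mp hℓ
      have e₁ : m - 1 - ℓ = m - (ℓ + 1) := by omega
      have e₂ : m - 1 - ℓ + 1 = m - ℓ := by omega
      rw [e₂, e₁, chainReflect_sub (by omega : ℓ + 1 ≤ m), chainReflect_sub hℓ.le]
      have := hc ℓ hℓ.le
      have := hc (ℓ + 1) hℓ
      have := h ℓ hℓ
      congr 1
      omega
    rw [qBinomProd_of_antitone h, qBinomProd_of_antitone h', hgaps]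
    simp [chainReflect, hm]
  · push Not at h
    obtain ⟨ℓ, hℓ, hlt⟩ := h
    have := hc (ℓ + 1) hℓ
    rw [qBinomProd_eq_zero hℓ hlt, qBinomProd_eq_zero (ℓ := m - (ℓ + 1)) (by omega)]
    have e : m - (ℓ + 1) + 1 = m - ℓ := by omega
    rw [e, chainReflect_sub (by omega : ℓ + 1 ≤ m), chainReflect_sub hℓ.le]
    omega

end qBinomProd

def chainOf (L : ℕ) (j : ℕ → ℕ) : ℕ → ℕ
  | 0 => L
  | ℓ + 1 => j ℓ

def tupleBox (L n : ℕ) : Finset (ℕ → ℕ) :=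
  (univ : Finset (Fin (n + 1) → Fin (L + 1))).image
    fun g ℓ => if h : ℓ ≤ n then g ⟨ℓ, by omega⟩ else 0

lemma mem_tupleBox {L n : ℕ} {j : ℕ → ℕ} :
    j ∈ tupleBox L n ↔ (∀ ℓ, n < ℓ → j ℓ = 0) ∧ ∀ ℓ, j ℓ ≤ L := by
  constructor
  · intro hj
    obtain ⟨g, -, rfl⟩ := mem_image.mp hj
    refine ⟨fun ℓ hℓ => dif_neg (by omega), fun ℓ => ?_⟩
    dsimp only
    split_ifs
    · exact Nat.lt_succ_iff.mp (g _).2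
    · exact L.zero_le
  · rintro ⟨hzero, hle⟩
    refine mem_image.mpr ⟨fun i => ⟨j i, Nat.lt_succ_of_le (hle i)⟩, mem_univ _, funext fun ℓ => ?_⟩
    split_ifs with h
    · rfl
    · exact (hzero ℓ (by omega)).symm

def tupleReflect (L n : ℕ) (j : ℕ → ℕ) (i : ℕ) : ℕ := chainReflect (n + 2) (chainOf L j) (i + 1)

def qMultExponent (L n p : ℕ) (j : ℕ → ℕ) : ℤ :=
  ∑ ℓ ∈ range n, ((L : ℤ) - j ℓ) * j (ℓ + 1) - ∑ ℓ ∈ Ico (n + 1 - p) (n + 1), (j ℓ : ℤ)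

section tupleReflect

variable {L n : ℕ} {j : ℕ → ℕ}

lemma tupleReflect_of_le {i : ℕ} (hi : i ≤ n) : tupleReflect L n j i = L - j (n - i) := by
  rw [tupleReflect, chainReflect, show n + 2 - (i + 1) = n - i + 1 by omega]
  rfl

lemma tupleReflect_of_lt {i : ℕ} (hi : n < i) : tupleReflect L n j i = 0 := by
  rw [tupleReflect, chainReflect, show n + 2 - (i + 1) = 0 by omega]
  exact Nat.sub_self L

lemma tupleReflect_mem : tupleReflect L n j ∈ tupleBox L n :=
  mem_tupleBox.mpr ⟨fun _ hi => tupleReflect_of_lt hi, fun _ => Nat.sub_le _ _⟩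

lemma tupleReflect_tupleReflect (hj : j ∈ tupleBox L n) :
    tupleReflect L n (tupleReflect L n j) = j := by
  obtain ⟨hzero, hle⟩ := mem_tupleBox.mp hj
  funext i
  rcases le_or_gt i n with hi | hi
  · rw [tupleReflect_of_le hi, tupleReflect_of_le (Nat.sub_le n i), Nat.sub_sub_self hi]
    have := hle i
    omega
  · rw [tupleReflect_of_lt hi, hzero i hi]

lemma chainOf_tupleReflect (hj : j (n + 1) = 0) :
    chainOf L (tupleReflect L n j) = chainReflect (n + 2) (chainOf L j) := by
  funext ℓ
  cases ℓ with
  | zero => simp [chainOf, chainReflect, hj]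
  | succ i => rfl

lemma qBinomProd_chainOf_tupleReflect (hj : j ∈ tupleBox L n) :
    qBinomProd (n + 2) (chainOf L (tupleReflect L n j)) = qBinomProd (n + 2) (chainOf L j) := by
  obtain ⟨hzero, hle⟩ := mem_tupleBox.mp hj
  rw [chainOf_tupleReflect (hzero _ n.lt_succ_self)]
  refine qBinomProd_chainReflect (hzero _ n.lt_succ_self) fun ℓ _ => ?_
  cases ℓ with
  | zero => exact le_rfl
  | succ i => exact hle i

lemma sum_range_tupleReflect_mul (hj : ∀ ℓ, j ℓ ≤ L) :
    ∑ ℓ ∈ range n, ((L : ℤ) - tupleReflect L n j ℓ) * tupleReflect L n j (ℓ + 1) =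
      ∑ ℓ ∈ range n, ((L : ℤ) - j ℓ) * j (ℓ + 1) := by
  rw [← sum_range_reflect]
  refine sum_congr rfl fun ℓ hℓ => ?_
  have hℓ := mem_range.mp hℓ
  rw [tupleReflect_of_le (by omega), tupleReflect_of_le (by omega),
    show n - (n - 1 - ℓ) = ℓ + 1 by omega, show n - (n - 1 - ℓ + 1) = ℓ by omega]
  push_cast [Nat.cast_sub (hj _)]
  ring

lemma sum_Ico_tupleReflect {p : ℕ} (hp : p ≤ n + 1) (hj : ∀ ℓ, j ℓ ≤ L) :
    ∑ ℓ ∈ Ico p (n + 1), (tupleReflect L n j ℓ : ℤ) = ∑ ℓ ∈ range (n + 1 - p), ((L : ℤ) - j ℓ) := by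
  rw [sum_Ico_eq_sum_range, ← sum_range_reflect]
  refine sum_congr rfl fun ℓ hℓ => ?_
  have hℓ := mem_range.mp hℓ
  rw [tupleReflect_of_le (by omega), show n - (p + (n + 1 - p - 1 - ℓ)) = ℓ by omega,
    Nat.cast_sub (hj _)]

lemma qMultExponent_eq_add_tupleReflect {p : ℕ} (hp : p ≤ n + 1) (hj : ∀ ℓ, j ℓ ≤ L) :
    qMultExponent L n p j = (((n + 1 : ℕ) : ℤ) - p) * L - ∑ ℓ ∈ range (n + 1), (j ℓ : ℤ) +
      qMultExponent L n (n + 1 - p) (tupleReflect L n j) := by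
  rw [qMultExponent, qMultExponent, Nat.sub_sub_self hp, sum_range_tupleReflect_mul hj,
    sum_Ico_tupleReflect hp hj,
    ← sum_range_add_sum_Ico _ (Nat.sub_le (n + 1) p), sum_sub_distrib, sum_const, card_range,
    nsmul_eq_mul, Nat.cast_sub hp]
  ring

lemma sum_tupleReflect (hj : ∀ ℓ, j ℓ ≤ L) :
    ∑ ℓ ∈ range (n + 1), (tupleReflect L n j ℓ : ℤ) =
      ((n + 1 : ℕ) : ℤ) * L - ∑ ℓ ∈ range (n + 1), (j ℓ : ℤ) := by
  rw [range_eq_Ico, sum_Ico_tupleReflect (Nat.zero_le _) hj, ← range_eq_Ico, Nat.sub_zero,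
    sum_sub_distrib, sum_const, card_range, nsmul_eq_mul]

end tupleReflect

lemma qMultExponent_self (L n : ℕ) (j : ℕ → ℕ) :
    qMultExponent L n (n + 1) j = qMultExponent L n 0 j - ∑ ℓ ∈ range (n + 1), (j ℓ : ℤ) := by
  rw [qMultExponent, qMultExponent, Nat.sub_self, Nat.sub_zero, Ico_self, sum_empty, ← range_eq_Ico]
  ring

lemma qBinom_mul_prod_eq_qBinomProd {L n : ℕ} {j : ℕ → ℕ} (hj : j (n + 1) = 0) :
    qBinom L (j 0) * ∏ ℓ ∈ range n, qBinom (j ℓ) (j (ℓ + 1)) =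
      qBinomProd (n + 2) (chainOf L j) := by
  rw [qBinomProd, prod_range_succ', prod_range_succ]
  change _ = (∏ ℓ ∈ range n, qBinom (j ℓ) (j (ℓ + 1))) * qBinom (j n) (j (n + 1)) * qBinom L (j 0)
  rw [hj, Nat.cast_zero, qBinom_natCast_zero, mul_one, mul_comm]

lemma qMult_succ_eq_sum (L n p : ℕ) (a : ℤ) :
    qMult (n + 1) L p a = ∑ j ∈ tupleBox L n,
      if ∑ ℓ ∈ range (n + 1), (j ℓ : ℤ) = a then
        qv ^ qMultExponent L n p j * qBinomProd (n + 2) (chainOf L j)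
      else 0 := by
  rw [qMult, finsum_eq_sum_of_support_subset _ (s := tupleBox L n)]
  · refine sum_congr rfl fun j hj => ?_
    have hzero := (mem_tupleBox.mp hj).1
    rw [Nat.add_sub_cancel, qBinom_mul_prod_eq_qBinomProd (hzero _ n.lt_succ_self)]
    exact if_congr (and_iff_right hzero) rfl rfl
  · intro j hj
    rw [Function.mem_support, ne_eq, ite_eq_right_iff, Classical.not_imp] at hj
    obtain ⟨⟨hzero, -⟩, hne⟩ := hj
    rw [Nat.add_sub_cancel, qBinom_mul_prod_eq_qBinomProd (hzero _ le_rfl)] at hne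
    refine mem_tupleBox.mpr ⟨hzero, fun ℓ => ?_⟩
    rcases le_or_gt ℓ (n + 1) with hℓ | hℓ
    · exact le_apply_zero_of_qBinomProd_ne_zero (right_ne_zero_of_mul hne) (ℓ := ℓ + 1) (by omega)
    · rw [hzero ℓ hℓ.le]
      exact L.zero_le

lemma qMult_succ_eq_zpow_mul (L n p : ℕ) (hp : p ≤ n + 1) (a : ℤ) :
    qMult (n + 1) L p a = qv ^ ((((n + 1 : ℕ) : ℤ) - p) * L - a) *
      qMult (n + 1) L (n + 1 - p) (((n + 1 : ℕ) : ℤ) * L - a) := by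
  rw [qMult_succ_eq_sum, qMult_succ_eq_sum, mul_sum]
  refine sum_nbij' (tupleReflect L n) (tupleReflect L n) (fun _ _ => tupleReflect_mem)
    (fun _ _ => tupleReflect_mem) (fun _ hj => tupleReflect_tupleReflect hj)
    (fun _ hj => tupleReflect_tupleReflect hj) fun j hj => ?_
  have hle := (mem_tupleBox.mp hj).2
  simp only [sum_tupleReflect hle, sub_right_inj]
  split_ifs with hsum
  · rw [qBinomProd_chainOf_tupleReflect hj, qMultExponent_eq_add_tupleReflect hp hle, hsum,
      zpow_add₀ qv_ne_zero, mul_assoc]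
  · rw [mul_zero]

lemma qMult_succ_self (L n : ℕ) (b : ℤ) :
    qMult (n + 1) L (n + 1) b = qv ^ (-b) * qMult (n + 1) L 0 b := by
  rw [qMult_succ_eq_sum, qMult_succ_eq_sum, mul_sum]
  refine sum_congr rfl fun j _ => ?_
  split_ifs with hsum
  · rw [qMultExponent_self, hsum, sub_eq_neg_add, zpow_add₀ qv_ne_zero, mul_assoc]
  · rw [mul_zero]

/-- **Lemma 1 (symmetries of the `q`-multinomial coefficients).** For `k ≥ 1`,
`L ≥ 0`, `0 ≤ p ≤ k` and all integers `a`: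
`[L,a]⁽ᵖ⁾_k = q^{(k-p)L - a} [L, kL-a]⁽ᵏ⁻ᵖ⁾_k` and `[L,a]⁽⁰⁾_k = [L, kL-a]⁽⁰⁾_k`. -/
theorem qMult_symm (k L p : ℕ) (hk : 1 ≤ k) (hp : p ≤ k) (a : ℤ) :
    qMult k L p a =
        qv ^ (((k : ℤ) - p) * L - a) * qMult k L (k - p) ((k : ℤ) * L - a) ∧
      qMult k L 0 a = qMult k L 0 ((k : ℤ) * L - a) := by
  obtain ⟨n, rfl⟩ : ∃ n, k = n + 1 := ⟨k - 1, by omega⟩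
  refine ⟨qMult_succ_eq_zpow_mul L n p hp a, ?_⟩
  rw [qMult_succ_eq_zpow_mul L n 0 (Nat.zero_le _) a, Nat.sub_zero, qMult_succ_self, ← mul_assoc,
    ← zpow_add₀ qv_ne_zero]
  simp
end
end

section
/- Recurrence for the frequency-partition generating polynomials: for all integers k ≥ 1, 1 ≤ i ≤ k+1, 1 ≤ i' ≤ k+1 and L ≥ 3, G_{k,i,i';L}(q) = Σ_{ℓ=0}^{i'−1} q^{ℓ(L−1)} · G_{k,i,k−ℓ+1;L−1}(q). -/
/-!
Sort the admissible sequences `(f₁, …, f_{L-1})` by their last entry `ℓ = f_{L-1} ≤ i' - 1`.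
Deleting that entry is a bijection onto the admissible sequences of length `L - 2` whose last
entry is at most `k - ℓ` (the only constraint `f_{L-1}` took part in was `f_{L-2} + f_{L-1} ≤ k`),
and it lowers the weight `Σ j f_j` by `ℓ (L - 1)`.
-/

open scoped BigOperators
open scoped Classical

noncomputable section

/-- The generating polynomial `G_{k,i,i';L}(q)`: the sum over all sequences
`(f₁, …, f_{L-1})` of nonnegative integers (encoded as functions `f : ℕ → ℕ`
supported on `{1, …, L-1}`) with `f₁ ≤ i-1`, `f_{L-1} ≤ i'-1` and
`f_j + f_{j+1} ≤ k` for `1 ≤ j ≤ L-2`, of `q^{Σ_{j=1}^{L-1} j f_j}`. -/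
def Gpoly (k i i' L : ℕ) : RatFunc ℚ :=
  ∑ᶠ f : ℕ → ℕ,
    if (∀ j, f j ≠ 0 → 1 ≤ j ∧ j ≤ L - 1) ∧ f 1 ≤ i - 1 ∧ f (L - 1) ≤ i' - 1 ∧
        (∀ j, 1 ≤ j → j ≤ L - 2 → f j + f (j + 1) ≤ k) then
      qv ^ (∑ j ∈ Finset.Icc 1 (L - 1), j * f j)
    else 0

namespace Gpoly

def Admissible (k i i' L : ℕ) (f : ℕ → ℕ) : Prop :=
  (∀ j, f j ≠ 0 → 1 ≤ j ∧ j ≤ L - 1) ∧ f 1 ≤ i - 1 ∧ f (L - 1) ≤ i' - 1 ∧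
    (∀ j, 1 ≤ j → j ≤ L - 2 → f j + f (j + 1) ≤ k)

def weight (L : ℕ) (f : ℕ → ℕ) : ℕ := ∑ j ∈ Finset.Icc 1 (L - 1), j * f j

variable {k i i' L : ℕ} {f : ℕ → ℕ}

lemma Admissible.le (hf : Admissible k i i' L f) (j : ℕ) : f j ≤ k + i' := by
  obtain ⟨hsupp, -, hlast, hadj⟩ := hf
  by_cases hz : f j = 0
  · omega
  obtain ⟨hj1, hjL⟩ := hsupp j hz
  rcases le_or_gt j (L - 2) with hj | hj
  · have := hadj j hj1 hj
    omega
  · obtain rfl : j = L - 1 := by omega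
    omega

lemma Admissible.eq_zero_of_le (hf : Admissible k i i' L f) {j : ℕ} (hj : L ≤ j) : f j = 0 := by
  by_contra hz
  have := hf.1 j hz
  omega

lemma finite_setOf_admissible (k i i' L : ℕ) : {f | Admissible k i i' L f}.Finite := by
  let restrict (f : {f // Admissible k i i' L f}) (j : Fin L) : Fin (k + i' + 1) :=
    ⟨f.1 j, Nat.lt_succ_of_le (f.2.le j)⟩
  refine Set.finite_coe_iff.mp (Finite.of_injective restrict fun f g hfg => ?_)
  ext j
  by_cases hj : j < L
  · simpa [restrict] using congrArg Fin.val (congrFun hfg ⟨j, hj⟩)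
  · rw [f.2.eq_zero_of_le (not_lt.mp hj), g.2.eq_zero_of_le (not_lt.mp hj)]

def admissibles (k i i' L : ℕ) : Finset (ℕ → ℕ) := (finite_setOf_admissible k i i' L).toFinset

lemma mem_admissibles : f ∈ admissibles k i i' L ↔ Admissible k i i' L f :=
  Set.Finite.mem_toFinset _

lemma eq_sum_admissibles (k i i' L : ℕ) :
    Gpoly k i i' L = ∑ f ∈ admissibles k i i' L, qv ^ weight L f := by
  rw [Gpoly, finsum_eq_sum_of_support_subset _ (s := admissibles k i i' L)]
  · exact Finset.sum_congr rfl fun f hf => if_pos (mem_admissibles.mp hf)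
  · intro f hf
    by_contra hnot
    exact hf (if_neg (mt mem_admissibles.mpr hnot))

lemma Admissible.update_last_zero (hL : 3 ≤ L) (hf : Admissible k i i' L f) :
    Admissible k i (k - f (L - 1) + 1) (L - 1) (Function.update f (L - 1) 0) := by
  obtain ⟨hsupp, hfirst, -, hadj⟩ := hf
  refine ⟨fun j hj => ?_, ?_, ?_, fun j hj1 hj2 => ?_⟩
  · rw [Function.update_apply] at hj
    split_ifs at hj with h
    · exact absurd rfl hj
    · have := hsupp j hj
      omega
  · rwa [Function.update_of_ne (by omega)]
  · have := hadj (L - 2) (by omega) le_rfl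
    rw [Function.update_of_ne (by omega), show L - 1 - 1 = L - 2 by omega]
    rw [show L - 2 + 1 = L - 1 by omega] at this
    omega
  · rw [Function.update_of_ne (by omega), Function.update_of_ne (by omega)]
    exact hadj j hj1 (by omega)

lemma Admissible.update_last {l : ℕ} (hL : 3 ≤ L) (hli' : l < i') (hlk : l ≤ k)
    (hf : Admissible k i (k - l + 1) (L - 1) f) :
    Admissible k i i' L (Function.update f (L - 1) l) := by
  obtain ⟨hsupp, hfirst, hlast, hadj⟩ := hf
  refine ⟨fun j hj => ?_, ?_, ?_, fun j hj1 hj2 => ?_⟩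
  · rw [Function.update_apply] at hj
    split_ifs at hj with h
    · omega
    · have := hsupp j hj
      omega
  · rwa [Function.update_of_ne (by omega)]
  · rw [Function.update_self]
    omega
  · rw [Function.update_of_ne (by omega)]
    rcases hj2.eq_or_lt with rfl | hj
    · rw [show L - 2 + 1 = L - 1 by omega, Function.update_self]
      rw [show L - 1 - 1 = L - 2 by omega] at hlast
      omega
    · rw [Function.update_of_ne (by omega)]
      exact hadj j hj1 (by omega)

lemma weight_eq_weight_update_add (hL : 2 ≤ L) (f : ℕ → ℕ) :
    weight L f = weight (L - 1) (Function.update f (L - 1) 0) + (L - 1) * f (L - 1) := by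
  obtain ⟨n, rfl⟩ : ∃ n, L = n + 2 := ⟨L - 2, by omega⟩
  simp only [weight, Nat.add_sub_cancel, show n + 2 - 1 = n + 1 by omega]
  rw [Finset.sum_Icc_succ_top (by omega)]
  congr 1
  refine Finset.sum_congr rfl fun j hj => ?_
  rw [Function.update_of_ne (by simp at hj; omega)]

lemma sum_admissibles_filter_last_eq {l : ℕ} (hL : 3 ≤ L) (hli' : l < i') (hlk : l ≤ k) :
    ∑ f ∈ admissibles k i i' L with f (L - 1) = l, qv ^ weight L f =
      qv ^ (l * (L - 1)) * Gpoly k i (k - l + 1) (L - 1) := by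
  rw [eq_sum_admissibles, Finset.mul_sum]
  apply Finset.sum_nbij' (Function.update · (L - 1) 0) (Function.update · (L - 1) l)
  · intro f hf
    rw [Finset.mem_filter, mem_admissibles] at hf
    rw [mem_admissibles, ← hf.2]
    exact hf.1.update_last_zero hL
  · intro f hf
    rw [mem_admissibles] at hf
    rw [Finset.mem_filter, mem_admissibles, Function.update_self]
    exact ⟨hf.update_last hL hli' hlk, rfl⟩
  · intro f hf
    rw [Finset.mem_filter] at hf
    rw [Function.update_idem, ← hf.2, Function.update_eq_self]
  · intro f hf
    rw [mem_admissibles] at hf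
    rw [Function.update_idem, ← hf.eq_zero_of_le le_rfl, Function.update_eq_self]
  · intro f hf
    rw [Finset.mem_filter] at hf
    rw [weight_eq_weight_update_add (by omega), hf.2, ← pow_mul_comm, pow_add, mul_comm l]

end Gpoly

theorem Gpoly_recurrence_general (k i i' L : ℕ) (hi'1 : 1 ≤ i') (hi'2 : i' ≤ k + 1) (hL : 3 ≤ L) :
    Gpoly k i i' L =
      ∑ l ∈ Finset.range i', qv ^ (l * (L - 1)) * Gpoly k i (k - l + 1) (L - 1) := by
  have hlast_lt : ∀ f ∈ Gpoly.admissibles k i i' L, f (L - 1) ∈ Finset.range i' := by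
    intro f hf
    have := (Gpoly.mem_admissibles.mp hf).2.2.1
    rw [Finset.mem_range]
    omega
  rw [Gpoly.eq_sum_admissibles, ← Finset.sum_fiberwise_of_maps_to hlast_lt]
  refine Finset.sum_congr rfl fun l hl => ?_
  have hli' := Finset.mem_range.mp hl
  exact Gpoly.sum_admissibles_filter_last_eq hL hli' (by omega)

/-- **Recurrence (4.1).** For `k ≥ 1`, `1 ≤ i ≤ k+1`, `1 ≤ i' ≤ k+1` and `L ≥ 3`:
`G_{k,i,i';L}(q) = Σ_{ℓ=0}^{i'-1} q^{ℓ(L-1)} G_{k,i,k-ℓ+1;L-1}(q)`. -/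
theorem Gpoly_recurrence (k i i' L : ℕ) (hk : 1 ≤ k) (hi1 : 1 ≤ i) (hi2 : i ≤ k + 1)
    (hi'1 : 1 ≤ i') (hi'2 : i' ≤ k + 1) (hL : 3 ≤ L) :
    Gpoly k i i' L =
      ∑ l ∈ Finset.range i', qv ^ (l * (L - 1)) * Gpoly k i (k - l + 1) (L - 1) :=
  Gpoly_recurrence_general k i i' L hi'1 hi'2 hL

end
end
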